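/- arXiv:2304.05676 — 2 statements merged into one kernel-verified Lean document; each statement's English description precedes it below -/
import Mathlib

section
/- Let 0 ≤ β < 1 and α, λ ≥ 0. Then |ρ(θ)| ≤ 1 for all θ ∈ [-π, π] if and only if α + λ ≤ 1, where ρ(θ) = (α(exp(-iθ)-1) + 1 - β + λ(exp(iθ)-1)) / (1 - β·exp(-iθ)). -/
/-!
Write `c = cos θ`, `s = sin θ` and `σ = α + λ`. With `N` and `D` the numerator and denominator
of `ρ(θ)`, a direct computation gives
`|D|² - |N|² = 2 (1 - c) (1 - σ) (β + σ) + 4 α λ s²`,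
which is nonnegative when `σ ≤ 1`. Conversely `ρ(π) = (1 - β - 2σ) / (1 + β)`, and
`|ρ(π)| ≤ 1` forces `σ ≤ 1`.
-/

open Real Complex

noncomputable def ampFactor (α β lam : ℝ) (θ : ℝ) : ℂ :=
  ((α : ℂ) * (Complex.exp (-(Complex.I * θ)) - 1) + 1 - (β : ℂ)
      + (lam : ℂ) * (Complex.exp (Complex.I * θ) - 1)) /
    (1 - (β : ℂ) * Complex.exp (-(Complex.I * θ)))

lemma exp_I_mul_ofReal (θ : ℝ) : exp (I * θ) = ⟨Real.cos θ, Real.sin θ⟩ := by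
  rw [mul_comm, exp_mul_I]; apply Complex.ext <;> simp [← ofReal_cos, ← ofReal_sin]

lemma normSq_den_sub_normSq_num (α β lam θ : ℝ) :
    normSq (1 - (β : ℂ) * exp (-(I * θ))) -
        normSq ((α : ℂ) * (exp (-(I * θ)) - 1) + 1 - (β : ℂ) + (lam : ℂ) * (exp (I * θ) - 1)) =
      2 * (1 - Real.cos θ) * (1 - (α + lam)) * (β + (α + lam)) + 4 * α * lam * Real.sin θ ^ 2 := by
  have hneg : -(I * θ) = I * ((-θ : ℝ) : ℂ) := by push_cast; ring
  simp only [hneg, exp_I_mul_ofReal, Real.cos_neg, Real.sin_neg, normSq_apply, sub_re, sub_im,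
    add_re, add_im, mul_re, mul_im, ofReal_re, ofReal_im, one_re, one_im]
  linear_combination (β ^ 2 - (α + lam) ^ 2) * Real.sin_sq_add_cos_sq θ

lemma ampFactor_pi (α β lam : ℝ) (hβ : β ≠ -1) :
    ampFactor α β lam π = ((1 - β - 2 * (α + lam)) / (1 + β) : ℝ) := by
  have hβ' : (1 : ℂ) + β ≠ 0 := by exact_mod_cast (show (1 : ℝ) + β ≠ 0 by contrapose! hβ; linarith)
  have e : exp (I * π) = -1 := by rw [mul_comm, exp_pi_mul_I]
  rw [ampFactor, Complex.exp_neg, e, inv_neg, inv_one]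
  push_cast
  rw [div_eq_div_iff (by simpa [add_comm] using hβ') hβ']
  ring

lemma norm_ampFactor_le_one (α β lam θ : ℝ) (hα : 0 ≤ α) (hlam : 0 ≤ lam) (hβ : 0 ≤ β)
    (hσ : α + lam ≤ 1) : ‖ampFactor α β lam θ‖ ≤ 1 := by
  rw [ampFactor, norm_div]
  refine div_le_one_of_le₀ ?_ (norm_nonneg _)
  rw [Complex.norm_def, Complex.norm_def]
  refine Real.sqrt_le_sqrt (sub_nonneg.mp ?_)
  rw [normSq_den_sub_normSq_num]
  have hcos : 0 ≤ 1 - Real.cos θ := sub_nonneg.2 (Real.cos_le_one θ)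
  have hσ' : 0 ≤ 1 - (α + lam) := sub_nonneg.2 hσ
  positivity

theorem stmt_3_general (α β lam : ℝ) (hα : 0 ≤ α) (hlam : 0 ≤ lam)
    (hβ0 : 0 ≤ β) :
    (∀ θ ∈ Set.Icc (-Real.pi) Real.pi, ‖ampFactor α β lam θ‖ ≤ 1)
      ↔ α + lam ≤ 1 := by
  refine ⟨fun h ↦ ?_, fun hσ θ _ ↦ norm_ampFactor_le_one α β lam θ hα hlam hβ0 hσ⟩
  have hπ := h π ⟨by linarith [Real.pi_pos], le_rfl⟩
  rw [ampFactor_pi α β lam (by linarith), norm_real, Real.norm_eq_abs, abs_div,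
    abs_of_pos (by linarith : (0 : ℝ) < 1 + β), div_le_one (by linarith), abs_le] at hπ
  linarith [hπ.1]

theorem stmt_3 (α β lam : ℝ) (hα : 0 ≤ α) (hlam : 0 ≤ lam)
    (hβ0 : 0 ≤ β) (hβ1 : β < 1) :
    (∀ θ ∈ Set.Icc (-Real.pi) Real.pi, ‖ampFactor α β lam θ‖ ≤ 1)
      ↔ α + lam ≤ 1 :=
  stmt_3_general α β lam hα hlam hβ0
end

section
/- Let 0 ≤ β < 1, α, λ > 0 with α + λ < 1. Then |ρ(θ)| < 1 for all θ ∈ [-π, π] \ {0}, and ρ(0) = 1. -/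
/-!
With `z = e^{iθ}` (so `e^{-iθ} = z̄`) and `σ = α + λ`, the squared moduli of the denominator and
the numerator of `ρ(θ)` differ by `2(1 - cos θ)(β + σ)(1 - σ) + 4αλ sin² θ`. Both terms are
nonnegative and the first is positive for `θ ≠ 0` in `[-π, π]`; in particular the denominator
cannot vanish there.
-/

open Real Complex

open ComplexConjugate

theorem ampFactor_eq_div_conj (α β lam θ : ℝ) :
    ampFactor α β lam θ =
      (α * (conj (exp (θ * I)) - 1) + 1 - β + lam * (exp (θ * I) - 1)) /
        (1 - β * conj (exp (θ * I))) := by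
  have hconj : exp (-(I * θ)) = conj (exp (θ * I)) := by
    rw [← exp_conj]; simp [mul_comm]
  rw [ampFactor, hconj, mul_comm I]

theorem normSq_denom_sub_normSq_num {z : ℂ} (hz : ‖z‖ = 1) (α β lam : ℝ) :
    normSq (1 - β * conj z) - normSq (α * (conj z - 1) + 1 - β + lam * (z - 1)) =
      2 * (1 - z.re) * ((β + (α + lam)) * (1 - (α + lam))) + 4 * (α * lam) * z.im ^ 2 := by
  have hunit : z.re * z.re + z.im * z.im = 1 := by
    rw [← normSq_apply, normSq_eq_norm_sq, hz, one_pow]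
  simp only [normSq_apply, sub_re, sub_im, add_re, add_im, mul_re, mul_im, ofReal_re,
    ofReal_im, conj_re, conj_im, one_re, one_im]
  linear_combination (β ^ 2 - (α + lam) ^ 2) * hunit

theorem norm_div_lt_one_of_normSq_lt {a b : ℂ} (h : normSq a < normSq b) : ‖a / b‖ < 1 := by
  have hb : 0 < ‖b‖ := norm_pos_iff.mpr fun hb0 ↦ by
    simp [hb0, (normSq_nonneg a).not_gt] at h
  rw [norm_div, div_lt_one hb]
  simpa [normSq_eq_norm_sq, sq_lt_sq, abs_of_pos hb] using h

theorem Real.cos_lt_one_of_mem_Icc {θ : ℝ} (hθ : θ ∈ Set.Icc (-π) π) (hθ0 : θ ≠ 0) :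
    cos θ < 1 :=
  (cos_le_one θ).lt_of_ne fun h ↦ hθ0 <|
    (cos_eq_one_iff_of_lt_of_lt (by linarith [hθ.1, pi_pos]) (by linarith [hθ.2, pi_pos])).mp h

theorem ampFactor_zero (α lam : ℝ) {β : ℝ} (hβ : β ≠ 1) : ampFactor α β lam 0 = 1 := by
  have : (1 : ℂ) - β ≠ 0 := sub_ne_zero.mpr (by exact_mod_cast hβ.symm)
  simp [ampFactor, this]

theorem stmt_4 (α β lam : ℝ) (hα : 0 < α) (hlam : 0 < lam)
    (hβ0 : 0 ≤ β) (hβ1 : β < 1) (hsum : α + lam < 1) :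
    (∀ θ ∈ Set.Icc (-Real.pi) Real.pi, θ ≠ 0 →
      ‖ampFactor α β lam θ‖ < 1) ∧
    ampFactor α β lam 0 = 1 := by
  refine ⟨fun θ hθ hθ0 ↦ ?_, ampFactor_zero α lam hβ1.ne⟩
  rw [ampFactor_eq_div_conj]
  apply norm_div_lt_one_of_normSq_lt
  rw [← sub_pos, normSq_denom_sub_normSq_num (norm_exp_ofReal_mul_I θ), exp_ofReal_mul_I_re]
  have hcos : 0 < 1 - Real.cos θ := sub_pos.mpr (cos_lt_one_of_mem_Icc hθ hθ0)
  have hgap : 0 < (β + (α + lam)) * (1 - (α + lam)) := by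
    apply mul_pos <;> linarith
  positivity
end
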